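/- arXiv:1108.2642 — 7 statements merged into one kernel-verified Lean document; each statement's English description precedes it below -/
import Mathlib

section
/- If R is reversibly deletable for a prefix p with respect to B and also reversibly deletable for p with respect to B', then R is reversibly deletable for p with respect to B ∪ B'. -/
/-- A set of vincular patterns: each pattern is a length `k`, a permutation of `Fin k`,
and a set of adjacency positions `X ⊆ {1,...,k-1}` (1-based). -/
abbrev PatSet := Set (Σ k : ℕ, Equiv.Perm (Fin k) × Finset ℕ)

/-- `π` contains the vincular pattern `(σ, X)`: there are strictly increasing positions
whose letters are order-isomorphic to `σ`, with positions `x` and `x+1` (1-based) adjacent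
for each `x ∈ X`. -/
def ContainsV {n k : ℕ} (π : Equiv.Perm (Fin n)) (σ : Equiv.Perm (Fin k))
    (X : Finset ℕ) : Prop :=
  ∃ i : Fin k → Fin n, StrictMono i ∧
    (∀ a b : Fin k, π (i a) < π (i b) ↔ σ a < σ b) ∧
    (∀ x ∈ X, ∀ (hx : x < k) (hx' : x - 1 < k),
      (i ⟨x, hx⟩ : ℕ) = (i ⟨x - 1, hx'⟩ : ℕ) + 1)

/-- `π` avoids every pattern in `B`. -/
def AvoidsAll {n : ℕ} (π : Equiv.Perm (Fin n)) (B : PatSet) : Prop :=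
  ∀ b ∈ B, ¬ ContainsV π b.2.1 b.2.2

/-- The positions of the prefix indices `R` inside `Fin n`. -/
def prefIndices {n k : ℕ} (h : k ≤ n) (R : Finset (Fin k)) : Finset (Fin n) :=
  R.map (Fin.castLEEmb h)

/-- The deletion map `d_R`: delete the letters of `π` at the (prefix) positions in `R`
and reduce, yielding a permutation of length `n - |R|`. -/
def deletePerm {n k : ℕ} (h : k ≤ n) (R : Finset (Fin k)) (π : Equiv.Perm (Fin n)) :
    Equiv.Perm (Fin (n - R.card)) :=
  ((prefIndices h R)ᶜ.orderIsoOfFin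
      (by simp [prefIndices, Finset.card_compl])).toEquiv.trans
    ((π.subtypeEquiv (fun x => by
        simp [prefIndices, Finset.mem_compl, Finset.mem_image])).trans
      (((prefIndices h R).image π)ᶜ.orderIsoOfFin
        (by simp [prefIndices, Finset.card_compl,
              Finset.card_image_of_injective _ π.injective])).toEquiv.symm)

/-- The deletion map `d_R` on prefix words: delete the letters of `w` at positions in `R`
and renumber the remaining letters. -/
def deleteWord {n k : ℕ} (R : Finset (Fin k)) (w : Fin k → Fin n)
    (hw : Function.Injective w) (i : Fin (k - R.card)) : Fin (n - R.card) :=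
  ((R.image w)ᶜ.orderIsoOfFin
      (by simp [Finset.card_compl, Finset.card_image_of_injective _ hw])).symm
    ⟨w ((Rᶜ.orderIsoOfFin (by simp [Finset.card_compl])) i), by
      have h2 := ((Rᶜ.orderIsoOfFin (by simp [Finset.card_compl])) i).2
      simp only [Finset.mem_compl] at h2 ⊢
      simp only [Finset.mem_image, not_exists, not_and]
      intro a ha hae
      exact h2 (hw hae ▸ ha)⟩

/-- `R` is reversibly deletable for the prefix pattern `p` with respect to `B`. -/
def ReversiblyDeletable (B : PatSet) {k : ℕ} (p : Equiv.Perm (Fin k))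
    (R : Finset (Fin k)) : Prop :=
  ∀ n (h : k ≤ n) (w : Fin k → Fin n) (hw : Function.Injective w),
    (∀ a b : Fin k, w a < w b ↔ p a < p b) →
    (∃ π : Equiv.Perm (Fin n), AvoidsAll π B ∧ ∀ i : Fin k, π (Fin.castLE h i) = w i) →
    Set.BijOn (deletePerm h R)
      {π : Equiv.Perm (Fin n) | AvoidsAll π B ∧ ∀ i : Fin k, π (Fin.castLE h i) = w i}
      {τ : Equiv.Perm (Fin (n - R.card)) | AvoidsAll τ B ∧
        ∀ i : Fin (k - R.card),
          τ (Fin.castLE (Nat.sub_le_sub_right h R.card) i) = deleteWord R w hw i}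

/-!
Avoiding `B ∪ B'` means avoiding both `B` and `B'`, so the two fibres of the theorem for `B ∪ B'`
are the intersections of the corresponding fibres for `B` and for `B'`, and an intersection of
bijections is a bijection as soon as the map is injective on the union of the domains. That
injectivity holds because `d_R` is injective on all permutations with a fixed prefix `w`: the
deleted letters are the letters of `w` at `R`, so the surviving letters are recovered by
un-reducing with respect to the complement of that set.
-/

lemma avoidsAll_union_iff {n : ℕ} (π : Equiv.Perm (Fin n)) (B B' : PatSet) :
    AvoidsAll π (B ∪ B') ↔ AvoidsAll π B ∧ AvoidsAll π B' := by
  simp only [AvoidsAll, Set.mem_union, or_imp, forall_and]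

section deletePerm

variable {n k : ℕ} (h : k ≤ n) (R : Finset (Fin k))

lemma image_prefIndices_eq_image {w : Fin k → Fin n} {π : Equiv.Perm (Fin n)}
    (hπ : ∀ i, π (Fin.castLE h i) = w i) :
    (prefIndices h R).image π = R.image w := by
  simp only [prefIndices, Finset.map_eq_image, Finset.image_image, Function.comp_def,
    Fin.castLEEmb_apply, hπ]

lemma orderEmbOfFin_deletePerm (π : Equiv.Perm (Fin n)) {x : Fin n}
    (hx : x ∈ (prefIndices h R)ᶜ) (c₁ : (prefIndices h R)ᶜ.card = n - R.card)
    (c₂ : ((prefIndices h R).image π)ᶜ.card = n - R.card) :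
    ((prefIndices h R).image π)ᶜ.orderEmbOfFin c₂
      (deletePerm h R π (((prefIndices h R)ᶜ.orderIsoOfFin c₁).symm ⟨x, hx⟩)) = π x := by
  simp [deletePerm, ← Finset.coe_orderIsoOfFin_apply]

lemma deletePerm_injOn (w : Fin k → Fin n) :
    Set.InjOn (deletePerm h R) {π | ∀ i, π (Fin.castLE h i) = w i} := by
  intro π hπ π' hπ' hd
  have hcard : ∀ σ : Equiv.Perm (Fin n), ((prefIndices h R).image σ)ᶜ.card = n - R.card :=
    fun σ => by
      simp [prefIndices, Finset.card_compl, Finset.card_image_of_injective _ σ.injective]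
  have c₁ : (prefIndices h R)ᶜ.card = n - R.card := by simp [prefIndices, Finset.card_compl]
  have himage : (prefIndices h R).image π = (prefIndices h R).image π' := by
    rw [image_prefIndices_eq_image h R hπ, image_prefIndices_eq_image h R hπ']
  ext x
  by_cases hx : x ∈ prefIndices h R
  · obtain ⟨i, -, rfl⟩ := Finset.mem_map.1 hx
    simp only [Fin.castLEEmb_apply, hπ i, hπ' i]
  · rw [← orderEmbOfFin_deletePerm h R π (Finset.mem_compl.2 hx) c₁ (hcard π),
      ← orderEmbOfFin_deletePerm h R π' (Finset.mem_compl.2 hx) c₁ (hcard π'), hd]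
    simp only [himage]

end deletePerm

/-- If `R` is reversibly deletable for `p` with respect to `B` and to `B'`,
then it is reversibly deletable for `p` with respect to `B ∪ B'`. -/
theorem stmt5 {k : ℕ} (B B' : PatSet) (p : Equiv.Perm (Fin k)) (R : Finset (Fin k))
    (hB : ReversiblyDeletable B p R) (hB' : ReversiblyDeletable B' p R) :
    ReversiblyDeletable (B ∪ B') p R := by
  intro n h w hw hwp ⟨π₀, hπ₀, hpre₀⟩
  rw [avoidsAll_union_iff] at hπ₀
  have hbij := (hB n h w hw hwp ⟨π₀, hπ₀.1, hpre₀⟩).inter (hB' n h w hw hwp ⟨π₀, hπ₀.2, hpre₀⟩)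
    ((deletePerm_injOn h R w).mono fun π hπ => hπ.elim (·.2) (·.2))
  convert hbij using 1 <;> ext <;>
    simp only [Set.mem_ofPred_eq, Set.mem_inter_iff, avoidsAll_union_iff] <;> exact and_and_right
end

section
/- Let σ ∈ S_t be a consecutive pattern (all adjacencies required) and p ∈ S_k a prefix pattern. If p_1 p_2 ⋯ p_{min(t,k)} is not order-isomorphic to σ_1 σ_2 ⋯ σ_{min(t,k)}, then deleting the first letter is a bijection between {π ∈ S_n : π avoids the consecutive pattern σ and the first k letters of π equal w} and {π' ∈ S_{n−1} : π' avoids the consecutive pattern σ and the first k−1 letters of π' equal d_1(w)}, for every prefix word w reducing to p. -/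
/-!
An occurrence of a consecutive pattern occupies a block of adjacent positions. If it used the
first position of `π`, it would start there, so the first `min(t,k)` letters of `w`, hence of
`p`, would be order-isomorphic to those of `σ`, which is excluded. So for `π` with prefix `w`
the occurrences of `σ` in `π` are exactly the occurrences in `d₁(π)` shifted by one position.
It remains that `d₁` maps the permutations with prefix `w` bijectively onto those with prefix
`d₁(w)`: the inverse puts `w₁` back in front and renumbers the other letters around it.
-/

open Finset

section Skip

variable {m n : ℕ}

def skip (a : Fin n) (hm : m + 1 = n) : Fin m ↪o Fin n :=
  ({a}ᶜ : Finset (Fin n)).orderEmbOfFin (by simp [card_compl]; omega)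

theorem skip_ne (a : Fin n) (hm : m + 1 = n) (i : Fin m) : skip a hm i ≠ a := by
  simpa [skip] using orderEmbOfFin_mem ({a}ᶜ : Finset (Fin n)) _ i

theorem eq_or_exists_skip_eq (a : Fin n) (hm : m + 1 = n) (x : Fin n) :
    x = a ∨ ∃ j, skip a hm j = x := by
  refine (eq_or_ne x a).imp_right fun hx => ?_
  exact (by simpa [skip] using hx : x ∈ Set.range (skip a hm))

theorem orderEmbOfFin_eq_skip {s : Finset (Fin n)} {a : Fin n} (hs : s = {a}ᶜ)
    (hc : s.card = m) (hm : m + 1 = n) : s.orderEmbOfFin hc = skip a hm := by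
  subst hs; rfl

theorem val_skip_zero (hn : 0 < n) (hm : m + 1 = n) (i : Fin m) :
    (skip ⟨0, hn⟩ hm i : ℕ) = i + 1 := by
  have hunique := orderEmbOfFin_unique (s := ({⟨0, hn⟩}ᶜ : Finset (Fin n)))
    (by simp [card_compl]; omega) (f := fun i : Fin m => ⟨i + 1, by omega⟩)
    (fun i => by simp only [mem_compl, mem_singleton, Fin.ext_iff]; omega)
    (fun i j hij => Fin.mk_lt_mk.2 (Nat.succ_lt_succ hij))
  rw [skip, ← hunique]

end Skip

section Insert

variable {m n : ℕ}

def insertFun (a c : Fin n) (hm : m + 1 = n) (τ : Equiv.Perm (Fin m)) (x : Fin n) : Fin n :=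
  if hx : x = a then c
  else skip c hm (τ ((({a}ᶜ : Finset (Fin n)).orderIsoOfFin
    (by simp [card_compl]; omega)).symm ⟨x, by simpa using hx⟩))

theorem insertFun_self (a c : Fin n) (hm : m + 1 = n) (τ : Equiv.Perm (Fin m)) :
    insertFun a c hm τ a = c :=
  dif_pos rfl

theorem insertFun_skip (a c : Fin n) (hm : m + 1 = n) (τ : Equiv.Perm (Fin m)) (j : Fin m) :
    insertFun a c hm τ (skip a hm j) = skip c hm (τ j) := by
  rw [insertFun, dif_neg (skip_ne a hm j)]
  congr
  exact OrderIso.symm_apply_apply _ j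

theorem insertFun_injective (a c : Fin n) (hm : m + 1 = n) (τ : Equiv.Perm (Fin m)) :
    Function.Injective (insertFun a c hm τ) := by
  intro x y hxy
  obtain hx | ⟨i, rfl⟩ := eq_or_exists_skip_eq a hm x <;>
    obtain hy | ⟨j, rfl⟩ := eq_or_exists_skip_eq a hm y
  · rw [hx, hy]
  · rw [hx, insertFun_self, insertFun_skip] at hxy
    exact absurd hxy.symm (skip_ne c hm _)
  · rw [hy, insertFun_self, insertFun_skip] at hxy
    exact absurd hxy (skip_ne c hm _)
  · rw [insertFun_skip, insertFun_skip, (skip c hm).injective.eq_iff, τ.injective.eq_iff] at hxy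
    rw [hxy]

noncomputable def insertPerm (a c : Fin n) (hm : m + 1 = n) (τ : Equiv.Perm (Fin m)) :
    Equiv.Perm (Fin n) :=
  Equiv.ofBijective _ (Finite.injective_iff_bijective.mp (insertFun_injective a c hm τ))

theorem insertPerm_self (a c : Fin n) (hm : m + 1 = n) (τ : Equiv.Perm (Fin m)) :
    insertPerm a c hm τ a = c :=
  insertFun_self a c hm τ

theorem insertPerm_skip (a c : Fin n) (hm : m + 1 = n) (τ : Equiv.Perm (Fin m)) (j : Fin m) :
    insertPerm a c hm τ (skip a hm j) = skip c hm (τ j) :=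
  insertFun_skip a c hm τ j

theorem Equiv.Perm.ext_skip (a : Fin n) (hm : m + 1 = n) {π₁ π₂ : Equiv.Perm (Fin n)}
    (ha : π₁ a = π₂ a) (hskip : ∀ j, π₁ (skip a hm j) = π₂ (skip a hm j)) : π₁ = π₂ := by
  ext1 x
  obtain rfl | ⟨j, rfl⟩ := eq_or_exists_skip_eq a hm x
  exacts [ha, hskip j]

end Insert

theorem Set.BijOn.sep_of_iff {α β : Type*} {f : α → β} {s : Set α} {t : Set β} {P : α → Prop}
    {Q : β → Prop} (hf : Set.BijOn f s t) (hPQ : ∀ x ∈ s, P x ↔ Q (f x)) :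
    Set.BijOn f {x | P x ∧ x ∈ s} {y | Q y ∧ y ∈ t} := by
  convert hf.subset_right (r := {y | Q y ∧ y ∈ t}) fun _ hy => hy.2 using 1
  ext x
  exact ⟨fun ⟨hP, hs⟩ => ⟨hs, (hPQ x hs).1 hP, hf.mapsTo hs⟩,
    fun ⟨hs, hQ, _⟩ => ⟨(hPQ x hs).2 hQ, hs⟩⟩

section Occurrence

variable {m n t : ℕ}

def IsOccurrence (π : Equiv.Perm (Fin n)) (σ : Equiv.Perm (Fin t)) (X : Finset ℕ)
    (i : Fin t → Fin n) : Prop :=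
  StrictMono i ∧ (∀ a b : Fin t, π (i a) < π (i b) ↔ σ a < σ b) ∧
    ∀ x ∈ X, ∀ (hx : x < t) (hx' : x - 1 < t), (i ⟨x, hx⟩ : ℕ) = (i ⟨x - 1, hx'⟩ : ℕ) + 1

theorem containsV_iff_exists_isOccurrence (π : Equiv.Perm (Fin n)) (σ : Equiv.Perm (Fin t))
    (X : Finset ℕ) : ContainsV π σ X ↔ ∃ i, IsOccurrence π σ X i :=
  Iff.rfl

theorem isOccurrence_comp_iff {π : Equiv.Perm (Fin n)} {τ : Equiv.Perm (Fin m)}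
    {σ : Equiv.Perm (Fin t)} {X : Finset ℕ} {e f : Fin m ↪o Fin n} (d : ℕ)
    (he : ∀ j, (e j : ℕ) = j + d) (hτ : ∀ j, f (τ j) = π (e j)) (i : Fin t → Fin m) :
    IsOccurrence π σ X (e ∘ i) ↔ IsOccurrence τ σ X i := by
  have hmono : StrictMono (e ∘ i) ↔ StrictMono i :=
    ⟨fun h _ _ hab => e.lt_iff_lt.mp (h hab), e.strictMono.comp⟩
  simp only [IsOccurrence, hmono, Function.comp_apply, ← hτ, f.lt_iff_lt, he,
    Nat.add_right_comm _ d 1, Nat.add_right_cancel_iff]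

theorem IsOccurrence.val_eq_val_zero_add {π : Equiv.Perm (Fin n)} {σ : Equiv.Perm (Fin t)}
    {i : Fin t → Fin n} (hi : IsOccurrence π σ (Icc 1 (t - 1)) i) (a : Fin t) :
    (i a : ℕ) = i ⟨0, a.pos⟩ + a := by
  obtain ⟨a, ha⟩ := a
  induction a with
  | zero => rfl
  | succ a ih =>
    have hstep : (i ⟨a + 1, ha⟩ : ℕ) = i ⟨a, by omega⟩ + 1 :=
      hi.2.2 (a + 1) (mem_Icc.2 ⟨by omega, by omega⟩) ha (by omega)
    rw [hstep, ih (by omega)]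
    rfl

theorem IsOccurrence.val_ne_zero_of_prefix {t k n : ℕ} {σ : Equiv.Perm (Fin t)}
    {p : Equiv.Perm (Fin k)} (h : k ≤ n)
    (hne : ¬ ∀ a b : Fin (min t k),
        p (Fin.castLE (min_le_right t k) a) < p (Fin.castLE (min_le_right t k) b) ↔
          σ (Fin.castLE (min_le_left t k) a) < σ (Fin.castLE (min_le_left t k) b))
    {w : Fin k → Fin n} (hiso : ∀ a b : Fin k, w a < w b ↔ p a < p b)
    {π : Equiv.Perm (Fin n)} (hpre : ∀ j : Fin k, π (Fin.castLE h j) = w j)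
    {i : Fin t → Fin n} (hi : IsOccurrence π σ (Icc 1 (t - 1)) i) (a : Fin t) :
    (i a : ℕ) ≠ 0 := by
  intro ha
  have h₀ : (i ⟨0, a.pos⟩ : ℕ) = 0 := by have := hi.val_eq_val_zero_add a; omega
  have hprefix : ∀ b : Fin (min t k), i (Fin.castLE (min_le_left t k) b) =
      Fin.castLE h (Fin.castLE (min_le_right t k) b) := fun b => by
    rw [Fin.ext_iff, hi.val_eq_val_zero_add, h₀]
    simp
  refine hne fun b c => ?_
  rw [← hiso, ← hpre, ← hpre, ← hprefix, ← hprefix, hi.2.1]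

end Occurrence

theorem deletePerm_spec {n k : ℕ} (h : k ≤ n) (R : Finset (Fin k)) (π : Equiv.Perm (Fin n))
    (hS : (prefIndices h R)ᶜ.card = n - R.card)
    (hT : ((prefIndices h R).image π)ᶜ.card = n - R.card) (i : Fin (n - R.card)) :
    ((prefIndices h R).image π)ᶜ.orderEmbOfFin hT (deletePerm h R π i) =
      π ((prefIndices h R)ᶜ.orderEmbOfFin hS i) := by
  rw [← coe_orderIsoOfFin_apply, ← coe_orderIsoOfFin_apply]
  simp only [deletePerm, Equiv.trans_apply, RelIso.coe_fn_toEquiv, Equiv.subtypeEquiv_apply]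
  exact congrArg Subtype.val (OrderIso.apply_symm_apply _ _)

theorem sub_card_singleton_add_one {α : Type*} {n : ℕ} {a : α} (hn : 0 < n) :
    n - ({a} : Finset α).card + 1 = n := by
  rw [card_singleton]; omega

section DeleteFirst

variable {n k : ℕ} (hk : 0 < k) (h : k ≤ n)

theorem skip_deleteWord_zero (w : Fin k → Fin n) (hw : Function.Injective w)
    (i : Fin (k - ({⟨0, hk⟩} : Finset (Fin k)).card)) :
    skip (w ⟨0, hk⟩) (sub_card_singleton_add_one (hk.trans_le h)) (deleteWord {⟨0, hk⟩} w hw i) =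
      w (skip ⟨0, hk⟩ (sub_card_singleton_add_one hk) i) := by
  have hcR : ({⟨0, hk⟩}ᶜ : Finset (Fin k)).card = k - ({⟨0, hk⟩} : Finset (Fin k)).card := by
    simp [card_compl]
  have hcT : (({⟨0, hk⟩} : Finset (Fin k)).image w)ᶜ.card =
      n - ({⟨0, hk⟩} : Finset (Fin k)).card := by
    simp [image_singleton, card_compl]
  rw [← orderEmbOfFin_eq_skip (by rw [image_singleton]) hcT, ← orderEmbOfFin_eq_skip rfl hcR,
    ← coe_orderIsoOfFin_apply, ← coe_orderIsoOfFin_apply]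
  exact congrArg Subtype.val (OrderIso.apply_symm_apply _ _)

theorem skip_deletePerm_zero (π : Equiv.Perm (Fin n))
    (i : Fin (n - ({⟨0, hk⟩} : Finset (Fin k)).card)) :
    skip (π ⟨0, hk.trans_le h⟩) (sub_card_singleton_add_one (hk.trans_le h))
        (deletePerm h {⟨0, hk⟩} π i) =
      π (skip ⟨0, hk.trans_le h⟩ (sub_card_singleton_add_one (hk.trans_le h)) i) := by
  have hS : prefIndices h {(⟨0, hk⟩ : Fin k)} = {⟨0, hk.trans_le h⟩} := rfl
  have hT : (prefIndices h {(⟨0, hk⟩ : Fin k)}).image π = {π ⟨0, hk.trans_le h⟩} := by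
    rw [hS, image_singleton]
  have hcS : (prefIndices h {(⟨0, hk⟩ : Fin k)})ᶜ.card =
      n - ({⟨0, hk⟩} : Finset (Fin k)).card := by
    simp [hS, card_compl]
  have hcT : ((prefIndices h {(⟨0, hk⟩ : Fin k)}).image π)ᶜ.card =
      n - ({⟨0, hk⟩} : Finset (Fin k)).card := by
    simp [hT, card_compl]
  have hm := sub_card_singleton_add_one (a := (⟨0, hk⟩ : Fin k)) (hk.trans_le h)
  have := deletePerm_spec h _ π hcS hcT i
  rwa [orderEmbOfFin_eq_skip (congrArg compl hS) hcS hm,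
    orderEmbOfFin_eq_skip (congrArg compl hT) hcT hm] at this

theorem skip_zero_castLE (i : Fin (k - ({⟨0, hk⟩} : Finset (Fin k)).card)) :
    skip ⟨0, hk.trans_le h⟩ (sub_card_singleton_add_one (hk.trans_le h))
        (Fin.castLE (Nat.sub_le_sub_right h _) i) =
      Fin.castLE h (skip ⟨0, hk⟩ (sub_card_singleton_add_one hk) i) := by
  ext
  simp [val_skip_zero]

theorem deletePerm_zero_insertPerm (c : Fin n)
    (τ : Equiv.Perm (Fin (n - ({⟨0, hk⟩} : Finset (Fin k)).card))) :
    deletePerm h {⟨0, hk⟩}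
      (insertPerm ⟨0, hk.trans_le h⟩ c (sub_card_singleton_add_one (hk.trans_le h)) τ) = τ := by
  ext1 i
  apply (skip c (sub_card_singleton_add_one (hk.trans_le h))).injective
  have := skip_deletePerm_zero hk h
    (insertPerm ⟨0, hk.trans_le h⟩ c (sub_card_singleton_add_one (hk.trans_le h)) τ) i
  rwa [insertPerm_self, insertPerm_skip] at this

theorem deletePerm_zero_injective_of_apply_zero {π₁ π₂ : Equiv.Perm (Fin n)}
    (h₀ : π₁ ⟨0, hk.trans_le h⟩ = π₂ ⟨0, hk.trans_le h⟩)
    (hdel : deletePerm h {⟨0, hk⟩} π₁ = deletePerm h {⟨0, hk⟩} π₂) : π₁ = π₂ := by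
  have hm := sub_card_singleton_add_one (a := (⟨0, hk⟩ : Fin k)) (hk.trans_le h)
  refine Equiv.Perm.ext_skip _ hm h₀ fun j => ?_
  rw [← skip_deletePerm_zero hk h, ← skip_deletePerm_zero hk h, hdel, h₀]

theorem prefix_iff_deletePerm_zero_prefix (w : Fin k → Fin n) (hw : Function.Injective w)
    {π : Equiv.Perm (Fin n)} (h₀ : π ⟨0, hk.trans_le h⟩ = w ⟨0, hk⟩) :
    (∀ i : Fin k, π (Fin.castLE h i) = w i) ↔
      ∀ i : Fin (k - ({(⟨0, hk⟩ : Fin k)} : Finset (Fin k)).card),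
        deletePerm h {⟨0, hk⟩} π (Fin.castLE (Nat.sub_le_sub_right h _) i) =
          deleteWord {⟨0, hk⟩} w hw i := by
  have hskip : ∀ i : Fin (k - ({(⟨0, hk⟩ : Fin k)} : Finset (Fin k)).card),
      deletePerm h {⟨0, hk⟩} π (Fin.castLE (Nat.sub_le_sub_right h _) i) =
          deleteWord {⟨0, hk⟩} w hw i ↔
        π (Fin.castLE h (skip ⟨0, hk⟩ (sub_card_singleton_add_one hk) i)) =
          w (skip ⟨0, hk⟩ (sub_card_singleton_add_one hk) i) := by
    intro i
    have hm := sub_card_singleton_add_one (a := (⟨0, hk⟩ : Fin k)) (hk.trans_le h)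
    rw [← (skip (π ⟨0, hk.trans_le h⟩) hm).injective.eq_iff, skip_deletePerm_zero hk h, h₀,
      skip_deleteWord_zero hk h, skip_zero_castLE]
  refine ⟨fun hπ i => (hskip i).mpr (hπ _), fun hdel i => ?_⟩
  obtain rfl | ⟨j, rfl⟩ :=
    eq_or_exists_skip_eq ⟨0, hk⟩ (sub_card_singleton_add_one (a := (⟨0, hk⟩ : Fin k)) hk) i
  exacts [h₀, (hskip j).mp (hdel j)]

theorem bijOn_deletePerm_zero_prefix (w : Fin k → Fin n) (hw : Function.Injective w) :
    Set.BijOn (deletePerm h {⟨0, hk⟩})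
      {π : Equiv.Perm (Fin n) | ∀ i : Fin k, π (Fin.castLE h i) = w i}
      {τ | ∀ i : Fin (k - ({(⟨0, hk⟩ : Fin k)} : Finset (Fin k)).card),
          τ (Fin.castLE (Nat.sub_le_sub_right h _) i) = deleteWord {⟨0, hk⟩} w hw i} := by
  refine ⟨fun π hπ => (prefix_iff_deletePerm_zero_prefix hk h w hw (hπ ⟨0, hk⟩)).mp hπ,
    fun π₁ hπ₁ π₂ hπ₂ hdel =>
      deletePerm_zero_injective_of_apply_zero hk h ((hπ₁ ⟨0, hk⟩).trans (hπ₂ ⟨0, hk⟩).symm) hdel,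
    fun τ hτ => ?_⟩
  have hins := deletePerm_zero_insertPerm hk h (w ⟨0, hk⟩) τ
  refine ⟨_, (prefix_iff_deletePerm_zero_prefix hk h w hw (insertPerm_self _ _ _ _)).mpr ?_, hins⟩
  rwa [hins]

end DeleteFirst

theorem containsV_consecutive_iff_deletePerm_zero {t k n : ℕ} (σ : Equiv.Perm (Fin t))
    (p : Equiv.Perm (Fin k)) (hk : 0 < k) (h : k ≤ n)
    (hne : ¬ ∀ a b : Fin (min t k),
        p (Fin.castLE (min_le_right t k) a) < p (Fin.castLE (min_le_right t k) b) ↔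
          σ (Fin.castLE (min_le_left t k) a) < σ (Fin.castLE (min_le_left t k) b))
    {w : Fin k → Fin n} (hiso : ∀ a b : Fin k, w a < w b ↔ p a < p b)
    {π : Equiv.Perm (Fin n)} (hpre : ∀ j : Fin k, π (Fin.castLE h j) = w j) :
    ContainsV π σ (Icc 1 (t - 1)) ↔ ContainsV (deletePerm h {⟨0, hk⟩} π) σ (Icc 1 (t - 1)) := by
  have hm := sub_card_singleton_add_one (a := (⟨0, hk⟩ : Fin k)) (hk.trans_le h)
  have hcomp := isOccurrence_comp_iff (σ := σ) (X := Icc 1 (t - 1)) 1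
    (val_skip_zero (hk.trans_le h) hm) (skip_deletePerm_zero hk h π)
  simp only [containsV_iff_exists_isOccurrence]
  refine ⟨fun ⟨i, hi⟩ => ?_, fun ⟨j, hj⟩ => ⟨_, (hcomp j).mpr hj⟩⟩
  have hskip : ∀ a, ∃ j, skip ⟨0, hk.trans_le h⟩ hm j = i a := fun a =>
    (eq_or_exists_skip_eq _ hm (i a)).resolve_left fun ha =>
      hi.val_ne_zero_of_prefix h hne hiso hpre a (congrArg Fin.val ha)
  choose j hj using hskip
  refine ⟨j, (hcomp j).mp ?_⟩
  rwa [show skip ⟨0, hk.trans_le h⟩ hm ∘ j = i from funext hj]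

/-- If the first `min(t,k)` letters of `p` are not order-isomorphic to
`σ₁⋯σ_{min(t,k)}`, then deleting the first letter is a bijection between the
`σ`-(consecutive-)avoiding permutations of length `n` with prefix word `w` and those of
length `n-1` with prefix word `d₁(w)`. -/
theorem stmt7 {t k n : ℕ} (σ : Equiv.Perm (Fin t)) (p : Equiv.Perm (Fin k))
    (hk : 0 < k) (h : k ≤ n)
    (hne : ¬ ∀ a b : Fin (min t k),
        p (Fin.castLE (min_le_right t k) a) < p (Fin.castLE (min_le_right t k) b) ↔
          σ (Fin.castLE (min_le_left t k) a) < σ (Fin.castLE (min_le_left t k) b))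
    (w : Fin k → Fin n) (hw : Function.Injective w)
    (hiso : ∀ a b : Fin k, w a < w b ↔ p a < p b) :
    Set.BijOn (deletePerm h {(⟨0, hk⟩ : Fin k)})
      {π : Equiv.Perm (Fin n) |
        ¬ ContainsV π σ (Finset.Icc 1 (t - 1)) ∧ ∀ i : Fin k, π (Fin.castLE h i) = w i}
      {τ : Equiv.Perm (Fin (n - ({(⟨0, hk⟩ : Fin k)} : Finset (Fin k)).card)) |
        ¬ ContainsV τ σ (Finset.Icc 1 (t - 1)) ∧
        ∀ i : Fin (k - ({(⟨0, hk⟩ : Fin k)} : Finset (Fin k)).card),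
          τ (Fin.castLE (Nat.sub_le_sub_right h _) i) =
            deleteWord {(⟨0, hk⟩ : Fin k)} w hw i} :=
  (bijOn_deletePerm_zero_prefix hk h w hw).sep_of_iff fun _ hpre =>
    not_congr (containsV_consecutive_iff_deletePerm_zero σ p hk h hne hiso hpre)
end

section
/- Fix a prefix pattern p of length k and a vector v ∈ ℕ^{k+1}, and let B be a set of vincular patterns. Suppose every permutation π of length k + |v| whose first k letters reduce to p and have spacing vector exactly v contains a copy of some σ ∈ B whose head lies entirely within the first k letters of π. Then v is a gap vector: for every u ≥ v componentwise, every permutation whose first k letters reduce to p with spacing vector u contains some pattern of B. -/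
/-- The `i`-th entry (0-based) of the spacing vector of the word `w`: the number of
values of `Fin n` not among the letters of `w` having exactly `i` letters of `w` below them. -/
def spacing {n k : ℕ} (w : Fin k → Fin n) (i : ℕ) : ℕ :=
  (Finset.univ.filter fun m : Fin n =>
    (∀ j, w j ≠ m) ∧ (Finset.univ.filter fun j => w j < m).card = i).card

/-- `π` contains a copy of the vincular pattern `(σ, X)` whose head (the part of `σ`
up to position `max X + 1`, 1-based) lies entirely within the first `k` letters. -/
def ContainsWithHead {n ℓ : ℕ} (k : ℕ) (π : Equiv.Perm (Fin n))
    (σ : Equiv.Perm (Fin ℓ)) (X : Finset ℕ) : Prop :=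
  ∃ i : Fin ℓ → Fin n, StrictMono i ∧
    (∀ a b : Fin ℓ, π (i a) < π (i b) ↔ σ a < σ b) ∧
    (∀ x ∈ X, ∀ (hx : x < ℓ) (hx' : x - 1 < ℓ),
      (i ⟨x, hx⟩ : ℕ) = (i ⟨x - 1, hx'⟩ : ℕ) + 1) ∧
    (∀ a : Fin ℓ, (a : ℕ) ≤ X.sup id → (i a : ℕ) < k)

open Finset Function

lemma Fin.val_le_val_apply_of_strictMono {m n : ℕ} {f : Fin m → Fin n} (hf : StrictMono f)
    (a : Fin m) : (a : ℕ) ≤ f a := by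
  obtain ⟨a, ha⟩ := a
  induction a with
  | zero => exact Nat.zero_le _
  | succ a ih =>
    exact (ih (by omega)).trans_lt (hf (show (⟨a, by omega⟩ : Fin m) < ⟨a + 1, ha⟩ from
      Nat.lt_succ_self a))

lemma Fin.val_apply_eq_of_forall_lt_mem_range {k m n : ℕ} (f : Fin m ↪o Fin n)
    (hf : ∀ j : Fin n, (j : ℕ) < k → j ∈ Set.range f) (a : Fin m) (ha : (a : ℕ) < k) :
    (f a : ℕ) = a := by
  induction a using WellFoundedLT.induction with
  | _ a ih =>
    have hle := Fin.val_le_val_apply_of_strictMono f.strictMono a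
    obtain ⟨c, hc⟩ := hf ⟨a, by omega⟩ ha
    have hca : (c : ℕ) ≤ a := by
      simpa [hc] using Fin.val_le_val_apply_of_strictMono f.strictMono c
    rcases hca.lt_or_eq with hlt | heq
    · have := ih c hlt (by omega)
      simp only [hc] at this
      omega
    · rw [← Fin.ext heq, hc]
      exact heq.symm

def gapSet {n k : ℕ} (w : Fin k → Fin n) (i : ℕ) : Finset (Fin n) :=
  univ.filter fun m => (∀ j, w j ≠ m) ∧ #(univ.filter fun j => w j < m) = i

section GapSet

variable {n k : ℕ} {w : Fin k → Fin n}

lemma card_gapSet (w : Fin k → Fin n) (i : ℕ) : #(gapSet w i) = spacing w i := rfl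

lemma apply_notMem_gapSet (j : Fin k) (i : ℕ) : w j ∉ gapSet w i := by
  simp [gapSet]

lemma eq_of_mem_gapSet {t : Fin n} {i i' : ℕ} (ht : t ∈ gapSet w i) (ht' : t ∈ gapSet w i') :
    i = i' := by
  simp only [gapSet, mem_filter] at ht ht'
  rw [← ht.2.2, ht'.2.2]

lemma map_gapSet {m : ℕ} (g : Fin m ↪o Fin n) (w : Fin k → Fin m) (i : ℕ) :
    (gapSet w i).map g.toEmbedding = gapSet (g ∘ w) i ∩ univ.map g.toEmbedding := by
  ext t
  simp only [gapSet, mem_map, mem_inter, mem_filter, mem_univ, true_and,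
    RelEmbedding.coe_toEmbedding, comp_apply]
  constructor
  · rintro ⟨s, ⟨hne, hcard⟩, rfl⟩
    exact ⟨⟨fun j h => hne j (g.injective h), by simpa using hcard⟩, s, rfl⟩
  · rintro ⟨⟨hne, hcard⟩, s, rfl⟩
    exact ⟨s, ⟨fun j h => hne j (congrArg g h), by simpa using hcard⟩, rfl⟩

variable {G : Fin (k + 1) → Finset (Fin n)}

lemma card_image_union_biUnion_of_subset_gapSet (hw : Injective w)
    (hG : ∀ i, G i ⊆ gapSet w i) :
    #(univ.image w ∪ univ.biUnion G) = k + ∑ i, #(G i) := by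
  have hdisj : Disjoint (univ.image w) (univ.biUnion G) := by
    simp only [disjoint_left, mem_image, mem_biUnion, mem_univ, true_and]
    rintro _ ⟨j, rfl⟩ ⟨i, hi⟩
    exact apply_notMem_gapSet j i (hG i hi)
  have hpair : ((univ : Finset (Fin (k + 1))) : Set (Fin (k + 1))).PairwiseDisjoint G := fun i _ i' _ hii' =>
    disjoint_left.2 fun _ hi hi' => hii' (Fin.ext (eq_of_mem_gapSet (hG i hi) (hG i' hi')))
  rw [card_union_of_disjoint hdisj, card_image_of_injective _ hw, card_univ, Fintype.card_fin,
    card_biUnion hpair]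

lemma spacing_eq_card_of_range_eq (hG : ∀ i, G i ⊆ gapSet w i) {m : ℕ} (g : Fin m ↪o Fin n)
    (hg : univ.map g.toEmbedding = univ.image w ∪ univ.biUnion G) {w' : Fin k → Fin m}
    (hw' : g ∘ w' = w) (i : Fin (k + 1)) : spacing w' i = #(G i) := by
  rw [← card_gapSet, ← card_map g.toEmbedding, map_gapSet, hw', hg]
  congr 1
  ext t
  simp only [mem_inter, mem_union, mem_image, mem_biUnion, mem_univ, true_and]
  constructor
  · rintro ⟨ht, ⟨j, rfl⟩ | ⟨i', hi'⟩⟩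
    · exact absurd ht (apply_notMem_gapSet j i)
    · rwa [Fin.ext (eq_of_mem_gapSet (hG i' hi') ht)] at hi'
  · exact fun ht => ⟨hG i ht, Or.inr ⟨i, ht⟩⟩

end GapSet

section ReducePerm

variable {α : Type*} [LinearOrder α] {m : ℕ}

lemma card_image_univ_of_injective {w : Fin m → α} (hw : Injective w) : #(univ.image w) = m := by
  rw [card_image_of_injective _ hw, card_fin]

noncomputable def rankEmb (w : Fin m → α) (hw : Injective w) : Fin m ↪o α :=
  (univ.image w).orderEmbOfFin (card_image_univ_of_injective hw)

noncomputable def reducePerm (w : Fin m → α) (hw : Injective w) : Equiv.Perm (Fin m) :=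
  Equiv.ofBijective
    (fun a => ((univ.image w).orderIsoOfFin (card_image_univ_of_injective hw)).symm
      ⟨w a, mem_image_of_mem w (mem_univ a)⟩)
    (Finite.injective_iff_bijective.mp fun _ _ hab => hw (congrArg Subtype.val
      (OrderIso.injective _ hab)))

variable (w : Fin m → α) (hw : Injective w)

lemma rankEmb_reducePerm (a : Fin m) : rankEmb w hw (reducePerm w hw a) = w a := by
  simp [rankEmb, reducePerm, ← coe_orderIsoOfFin_apply]

lemma map_univ_rankEmb : univ.map (rankEmb w hw).toEmbedding = univ.image w :=
  map_orderEmbOfFin_univ _ _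

lemma reducePerm_lt_reducePerm_iff (a b : Fin m) :
    reducePerm w hw a < reducePerm w hw b ↔ w a < w b := by
  rw [← (rankEmb w hw).lt_iff_lt, rankEmb_reducePerm, rankEmb_reducePerm]

end ReducePerm

lemma ContainsWithHead.containsV_of_orderEmbedding {k m n ℓ : ℕ} {π' : Equiv.Perm (Fin m)}
    {π : Equiv.Perm (Fin n)} {σ : Equiv.Perm (Fin ℓ)} {X : Finset ℕ}
    (hc : ContainsWithHead k π' σ X) (e : Fin m ↪o Fin n)
    (he : ∀ a : Fin m, (a : ℕ) < k → (e a : ℕ) = a)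
    (hπ : ∀ a b, π (e a) < π (e b) ↔ π' a < π' b) : ContainsV π σ X := by
  obtain ⟨i, hmono, hiso, hadj, hhead⟩ := hc
  refine ⟨e ∘ i, e.strictMono.comp hmono, fun a b => (hπ _ _).trans (hiso a b), ?_⟩
  intro x hx hxℓ hxℓ'
  have hxle : x ≤ X.sup id := le_sup (f := id) hx
  simp only [comp_apply]
  rw [he _ (hhead _ hxle), he _ (hhead _ ((Nat.sub_le x 1).trans hxle))]
  exact hadj x hx hxℓ hxℓ'

/-- Gap vector test: if every permutation with prefix pattern `p` and prefix spacing
vector exactly `v` contains a copy of some pattern of `B` whose head lies in the first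
`k` letters, then `v` is a gap vector: for any `u ≥ v`, every permutation whose first
`k` letters reduce to `p` with spacing vector `u` contains a pattern of `B`. -/
theorem stmt11 {k : ℕ} (B : PatSet) (p : Equiv.Perm (Fin k)) (v : Fin (k + 1) → ℕ)
    (H : ∀ π : Equiv.Perm (Fin (k + ∑ i, v i)),
      (∀ a b : Fin k,
        π (Fin.castLE (Nat.le_add_right k _) a) < π (Fin.castLE (Nat.le_add_right k _) b) ↔
          p a < p b) →
      (∀ i : Fin (k + 1),
        spacing (fun a : Fin k => π (Fin.castLE (Nat.le_add_right k _) a)) (i : ℕ) = v i) →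
      ∃ b ∈ B, ContainsWithHead k π b.2.1 b.2.2) :
    ∀ u : Fin (k + 1) → ℕ, (∀ i, v i ≤ u i) →
      ∀ n (h : k ≤ n) (π : Equiv.Perm (Fin n)),
        (∀ a b : Fin k, π (Fin.castLE h a) < π (Fin.castLE h b) ↔ p a < p b) →
        (∀ i : Fin (k + 1), spacing (fun a : Fin k => π (Fin.castLE h a)) (i : ℕ) = u i) →
        ∃ b ∈ B, ContainsV π b.2.1 b.2.2 := by
  intro u hu n h π hpat hsp
  set w : Fin k → Fin n := fun a => π (Fin.castLE h a)
  have hw : Injective w := π.injective.comp (Fin.castLE_injective h)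
  choose G hGw hGv using fun i => exists_subset_card_eq ((hu i).trans (hsp i).ge)
  set T := univ.image w ∪ univ.biUnion G
  have hS : #(T.map π.symm.toEmbedding) = k + ∑ i, v i := by
    rw [card_map, card_image_union_biUnion_of_subset_gapSet hw hGw]
    simp only [hGv]
  set e := (T.map π.symm.toEmbedding).orderEmbOfFin hS
  have he : ∀ a : Fin _, (a : ℕ) < k → (e a : ℕ) = a := by
    refine Fin.val_apply_eq_of_forall_lt_mem_range e fun j hj => ?_
    rw [range_orderEmbOfFin, mem_coe, mem_map_equiv, Equiv.symm_symm]
    exact mem_union_left _ (mem_image_of_mem w (mem_univ (⟨j, hj⟩ : Fin k)) :)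
  have hprefix : ∀ a : Fin k, e (Fin.castLE (Nat.le_add_right k _) a) = Fin.castLE h a :=
    fun a => Fin.ext (he _ a.isLt)
  have hπe : Injective (π ∘ e) := π.injective.comp e.injective
  have hrange : univ.map (rankEmb _ hπe).toEmbedding = T := by
    rw [map_univ_rankEmb, ← image_image, image_orderEmbOfFin_univ, map_eq_image, image_image]
    simp
  obtain ⟨b, hb, hcopy⟩ := H (reducePerm _ hπe)
    (fun a b => by rw [reducePerm_lt_reducePerm_iff]; simp only [comp_apply, hprefix, hpat])
    (fun i => (spacing_eq_card_of_range_eq hGw _ hrange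
      (funext fun a => by simp [rankEmb_reducePerm, hprefix, w]) i).trans (hGv i))
  exact ⟨b, hb, hcopy.containsV_of_orderEmbedding e he
    fun a b => (reducePerm_lt_reducePerm_iff _ hπe a b).symm⟩
end

section
/- Deleting the first letter gives a bijection between {π ∈ S_n : π avoids 23-1, π_1 = 1, π_2 = b} and {τ ∈ S_{n−1} : τ avoids 23-1, τ_1 = b−1}, for any 2 ≤ b ≤ n. -/
/-- Containment of 23-1. -/
def Contains23d1 {n : ℕ} (π : Equiv.Perm (Fin n)) : Prop :=
  ∃ (i j : Fin n) (h : (i : ℕ) + 1 < n), (i : ℕ) + 1 < (j : ℕ) ∧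
    π j < π i ∧ π i < π ⟨(i : ℕ) + 1, h⟩

open Equiv Finset

-- Stated for `s = {0}` so that it applies to finsets only propositionally equal to `{0}`.
lemma orderIsoOfFin_compl_singleton_zero_val {m k : ℕ} {s : Finset (Fin (m + 1))} (hs : s = {0})
    (h : sᶜ.card = k) (v : Fin k) : (sᶜ.orderIsoOfFin h v : ℕ) = v + 1 := by
  subst hs
  simp [orderEmbOfFin_compl_singleton]

lemma orderIsoOfFin_compl_singleton_zero_symm_val {m k : ℕ} {s : Finset (Fin (m + 1))}
    (hs : s = {0}) (h : sᶜ.card = k) (x : ↥sᶜ) :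
    ((sᶜ.orderIsoOfFin h).toEquiv.symm x : ℕ) + 1 = x := by
  rw [← orderIsoOfFin_compl_singleton_zero_val hs h]
  exact congrArg (fun y : ↥sᶜ ↦ (y : ℕ)) ((sᶜ.orderIsoOfFin h).toEquiv.apply_symm_apply x)

/-- `deletePerm` at the first position; the length `m + 1 - #{0}` of the result is
definitionally `m`. -/
def deleteFirst {m : ℕ} (π : Perm (Fin (m + 1))) : Perm (Fin m) :=
  deletePerm (le_refl (m + 1)) {0} π

lemma succ_deleteFirst_apply {m : ℕ} {π : Perm (Fin (m + 1))} (hπ : π 0 = 0) (v : Fin m) :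
    (deleteFirst π v).succ = π v.succ := by
  have hR : prefIndices (le_refl (m + 1)) {0} = {0} := rfl
  have hπR : (prefIndices (le_refl (m + 1)) {0}).image π = {0} := by rw [hR, image_singleton, hπ]
  ext
  -- `Fin.cast` retypes `v`, so that the unfolded `deletePerm` typechecks at reducible transparency.
  change (deletePerm (le_refl (m + 1)) {0} π (Fin.cast (by simp) v) : ℕ) + 1 = π v.succ
  dsimp only [deletePerm, Equiv.trans_apply, RelIso.coe_fn_toEquiv]
  rw [orderIsoOfFin_compl_singleton_zero_symm_val hπR]
  exact congrArg (fun i ↦ (π i : ℕ)) (Fin.ext (orderIsoOfFin_compl_singleton_zero_val hR _ _))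

@[simp]
lemma decomposeFin_symm_zero_apply_succ {m : ℕ} (τ : Perm (Fin m)) (v : Fin m) :
    Perm.decomposeFin.symm (0, τ) v.succ = (τ v).succ := by
  rw [Perm.decomposeFin_symm_apply_succ, swap_self, refl_apply]

lemma decomposeFin_symm_zero_deleteFirst {m : ℕ} {π : Perm (Fin (m + 1))} (hπ : π 0 = 0) :
    Perm.decomposeFin.symm (0, deleteFirst π) = π := by
  ext x : 1
  induction x using Fin.cases with
  | zero => simp [hπ]
  | succ v => rw [decomposeFin_symm_zero_apply_succ, succ_deleteFirst_apply hπ]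

lemma deleteFirst_decomposeFin_symm_zero {m : ℕ} (τ : Perm (Fin m)) :
    deleteFirst (Perm.decomposeFin.symm (0, τ)) = τ :=
  Equiv.ext fun v ↦ Fin.succ_injective m <| (succ_deleteFirst_apply (by simp) v).trans (decomposeFin_symm_zero_apply_succ τ v)

lemma contains23d1_decomposeFin_symm_zero_iff {m : ℕ} (τ : Perm (Fin m)) :
    Contains23d1 (Perm.decomposeFin.symm (0, τ)) ↔ Contains23d1 τ := by
  have mk_succ_add_one : ∀ (i : Fin m) (hi : (i : ℕ) + 1 < m) (hi' : (i.succ : ℕ) + 1 < m + 1),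
      (⟨(i.succ : ℕ) + 1, hi'⟩ : Fin (m + 1)) = (⟨(i : ℕ) + 1, hi⟩ : Fin m).succ :=
    fun _ _ _ ↦ rfl
  constructor
  · rintro ⟨i, j, hi, hij, hji, hii⟩
    induction i using Fin.cases with
    | zero => simp at hji
    | succ i =>
      induction j using Fin.cases with
      | zero => simp at hij
      | succ j =>
        have hi' : (i : ℕ) + 1 < m := by simpa using hi
        rw [mk_succ_add_one i hi'] at hii
        simp only [decomposeFin_symm_zero_apply_succ, Fin.succ_lt_succ_iff] at hji hii
        exact ⟨i, j, hi', by simpa using hij, hji, hii⟩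
  · rintro ⟨i, j, hi, hij, hji, hii⟩
    have hi' : (i.succ : ℕ) + 1 < m + 1 := by simpa using hi
    refine ⟨i.succ, j.succ, hi', by simpa using hij, by simpa using hji, ?_⟩
    rw [mk_succ_add_one i hi hi']
    simpa only [decomposeFin_symm_zero_apply_succ, Fin.succ_lt_succ_iff] using hii

/-- Deleting the first letter is a bijection from the `23-1`-avoiding permutations of
length `n` with `π₁ = 1, π₂ = b` to those of length `n-1` with first letter `b-1`
(letters written 1-based; here encoded 0-based in `Fin`). -/
theorem stmt13 {n b : ℕ} (hb : 2 ≤ b) (hbn : b ≤ n) :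
    Set.BijOn (deletePerm (le_refl n) {(⟨0, by omega⟩ : Fin n)})
      {π : Equiv.Perm (Fin n) | ¬ Contains23d1 π ∧
        π ⟨0, by omega⟩ = ⟨0, by omega⟩ ∧ π ⟨1, by omega⟩ = ⟨b - 1, by omega⟩}
      {τ : Equiv.Perm (Fin (n - ({(⟨0, by omega⟩ : Fin n)} : Finset (Fin n)).card)) |
        ¬ Contains23d1 τ ∧
        τ ⟨0, by simp only [Finset.card_singleton]; omega⟩ =
          ⟨b - 2, by simp only [Finset.card_singleton]; omega⟩} := by
  obtain ⟨m, rfl⟩ : ∃ m, n = m + 1 := ⟨n - 1, by omega⟩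
  refine Set.InvOn.bijOn (f' := fun τ : Perm (Fin m) ↦ Perm.decomposeFin.symm (0, τ))
    ⟨fun π hπ ↦ decomposeFin_symm_zero_deleteFirst hπ.2.1,
      fun τ _ ↦ deleteFirst_decomposeFin_symm_zero τ⟩ ?_ ?_
  · rintro π ⟨hπ, hπ0, hπ1⟩
    have hπ1' := succ_deleteFirst_apply hπ0 ⟨0, by omega⟩
    refine ⟨fun h ↦ hπ ?_, Fin.ext ?_⟩
    · rw [← decomposeFin_symm_zero_deleteFirst hπ0]
      exact (contains23d1_decomposeFin_symm_zero_iff _).2 h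
    · have hval := congrArg Fin.val (hπ1'.trans hπ1)
      simp only [Fin.val_succ] at hval
      change (deleteFirst π ⟨0, _⟩ : ℕ) = b - 2
      omega
  · rintro τ ⟨hτ, hτ0⟩
    refine ⟨fun h ↦ hτ ((contains23d1_decomposeFin_symm_zero_iff τ).1 h),
      Perm.decomposeFin_symm_apply_zero _ _, ?_⟩
    refine (decomposeFin_symm_zero_apply_succ τ ⟨0, by omega⟩).trans (Fin.ext ?_)
    have hτ0' : (τ ⟨0, by omega⟩ : ℕ) = b - 2 := congrArg Fin.val hτ0
    simp only [Fin.val_succ]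
    omega
end

section
/- Let f(n,k) denote the number of permutations of length n with exactly k inversions avoiding the vincular pattern 1-32. If π is such a permutation with n ≥ k+2, then π_j = j for all j ≥ k+2; consequently f(n,k) = f(k+1,k) for all n ≥ k+1. -/
/-- Containment of 1-32. -/
def Contains1d32 {n : ℕ} (π : Equiv.Perm (Fin n)) : Prop :=
  ∃ (i j : Fin n) (h : (j : ℕ) + 1 < n), i < j ∧
    π i < π ⟨(j : ℕ) + 1, h⟩ ∧ π ⟨(j : ℕ) + 1, h⟩ < π j

/-- Number of inversions of `π`. -/
def invCount {n : ℕ} (π : Equiv.Perm (Fin n)) : ℕ :=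
  (Finset.univ.filter fun q : Fin n × Fin n => q.1 < q.2 ∧ π q.2 < π q.1).card

/-- `fCount n k` is the number of `1-32`-avoiding permutations of length `n` with
exactly `k` inversions. -/
noncomputable def fCount (n k : ℕ) : ℕ :=
  Nat.card {π : Equiv.Perm (Fin n) // ¬ Contains1d32 π ∧ invCount π = k}

/-! If `j` is the largest point moved by `π` (counting from `0`), then `π` maps `{0, …, j}` onto
itself and `π i = j` for some `i < j`, so `π i > π (i + 1)`. Avoiding 1-32 forces `π l > π (i + 1)`
for every `l < i`; with the inversions `(i, t)`, `i < t ≤ j`, this gives at least `j` inversions.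
Hence a 1-32-avoiding permutation with `k` inversions fixes every point `≥ k + 1`, so it is the
extension by the identity of a permutation of `Fin (k + 1)` with the same inversions and the same
1-32 occurrences. -/

open Equiv Finset

variable {n : ℕ} {π : Perm (Fin n)}

lemma apply_lt_of_forall_le_apply_eq {m : ℕ}
    (hfix : ∀ l : Fin n, m ≤ (l : ℕ) → π l = l) {l : Fin n} (hl : (l : ℕ) < m) :
    (π l : ℕ) < m := by
  by_contra! hge
  have hl' : π l = l := π.injective (hfix (π l) hge)
  rw [hl'] at hge
  omega

lemma lt_of_forall_le_apply_eq_of_apply_lt {m : ℕ}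
    (hfix : ∀ l : Fin n, m ≤ (l : ℕ) → π l = l) {a b : Fin n} (hab : a < b)
    (hinv : π b < π a) : (b : ℕ) < m := by
  by_contra! hb
  rw [hfix b hb] at hinv
  by_cases ha : (a : ℕ) < m
  · have := apply_lt_of_forall_le_apply_eq hfix ha
    rw [Fin.lt_def] at hinv
    omega
  · rw [hfix a (by omega)] at hinv
    exact hab.asymm hinv

lemma lt_apply_of_not_contains1d32 (hav : ¬ Contains1d32 π) {l i : Fin n}
    (hi : (i : ℕ) + 1 < n) (hli : l < i) (hdesc : π ⟨i + 1, hi⟩ < π i) :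
    π ⟨i + 1, hi⟩ < π l := by
  refine lt_of_le_of_ne (not_lt.mp fun h => hav ⟨l, i, hi, hli, h, hdesc⟩) fun h => ?_
  have := Fin.val_eq_of_eq (π.injective h)
  rw [Fin.lt_def] at hli
  simp only at this
  omega

lemma le_invCount_of_forall_lt_apply_eq (hav : ¬ Contains1d32 π)
    {j : Fin n} (hj : π j ≠ j) (hfix : ∀ l : Fin n, j < l → π l = l) :
    (j : ℕ) ≤ invCount π := by
  have hle : ∀ l : Fin n, l ≤ j → π l ≤ j := fun l hl => Fin.le_def.mpr <| Nat.lt_succ_iff.mp <|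
    apply_lt_of_forall_le_apply_eq (fun l hl => hfix l (Fin.lt_def.mpr hl)) (Nat.lt_succ_of_le hl)
  set i := π.symm j
  have hπi : π i = j := π.apply_symm_apply j
  have hij : i < j := by
    refine lt_of_le_of_ne (not_lt.mp fun h => ?_) fun h => hj (h ▸ hπi)
    exact h.ne (hπi.symm.trans (hfix i h))
  have hi1 : (i : ℕ) + 1 < n := by omega
  set i1 : Fin n := ⟨i + 1, hi1⟩
  have hdesc : π i1 < π i := by
    refine hπi ▸ lt_of_le_of_ne (hle i1 (Fin.le_def.mpr hij)) fun h => ?_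
    have := Fin.val_eq_of_eq (π.injective (h.trans hπi.symm))
    simp [i1] at this
  set A := (Ioc i j).image fun t => (i, t)
  set B := (Iio i).image fun l => (l, i1)
  have hsub : A ∪ B ⊆ univ.filter fun q : Fin n × Fin n => q.1 < q.2 ∧ π q.2 < π q.1 := by
    simp only [A, B, subset_iff, mem_union, mem_image, mem_Ioc, mem_Iio, mem_filter, mem_univ,
      true_and]
    rintro _ (⟨t, ⟨hit, htj⟩, rfl⟩ | ⟨l, hli, rfl⟩)
    · exact ⟨hit, hπi ▸ lt_of_le_of_ne (hle t htj) fun h =>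
        hit.ne (π.injective (h.trans hπi.symm)).symm⟩
    · exact ⟨hli.trans (Fin.lt_def.mpr (Nat.lt_succ_self _)),
        lt_apply_of_not_contains1d32 hav hi1 hli hdesc⟩
  have hdisj : Disjoint A B := by
    simp only [A, B, disjoint_left, mem_image, mem_Ioc, mem_Iio]
    rintro _ ⟨t, -, rfl⟩ ⟨l, hli, hl⟩
    exact hli.ne (Prod.ext_iff.mp hl).1
  calc (j : ℕ) = #(Ioc i j) + #(Iio i) := by
        rw [Fin.card_Ioc, Fin.card_Iio]; omega
    _ = #(A ∪ B) := by
        rw [card_union_of_disjoint hdisj, card_image_of_injective _ (Prod.mk_right_injective i),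
          card_image_of_injective _ (Prod.mk_left_injective i1)]
    _ ≤ invCount π := card_le_card hsub

lemma le_invCount_of_apply_ne (hav : ¬ Contains1d32 π) {j : Fin n}
    (hj : π j ≠ j) : (j : ℕ) ≤ invCount π := by
  have hj' : j ∈ π.support := Perm.mem_support.mpr hj
  calc (j : ℕ) ≤ π.support.max' ⟨j, hj'⟩ := Fin.le_def.mp (π.support.le_max' j hj')
    _ ≤ invCount π := le_invCount_of_forall_lt_apply_eq hav
        (Perm.mem_support.mp (max'_mem _ _))
        fun l hl => Perm.notMem_support.mp fun h => (π.support.le_max' l h).not_gt hl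

lemma apply_eq_self_of_invCount_lt (hav : ¬ Contains1d32 π) {j : Fin n}
    (hj : invCount π < j) : π j = j :=
  not_not.mp fun h => (le_invCount_of_apply_ne hav h).not_gt hj

section Extend

variable {m : ℕ} (h : m ≤ n) (σ : Perm (Fin m))

lemma viaEmbedding_castLEEmb_apply_castLE (a : Fin m) :
    σ.viaEmbedding (Fin.castLEEmb h) (Fin.castLE h a) = Fin.castLE h (σ a) :=
  σ.viaEmbedding_apply (Fin.castLEEmb h) a

lemma viaEmbedding_castLEEmb_apply_of_le {x : Fin n} (hx : m ≤ (x : ℕ)) :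
    σ.viaEmbedding (Fin.castLEEmb h) x = x :=
  σ.viaEmbedding_apply_of_notMem _ x fun ⟨a, ha⟩ => by
    subst ha
    exact absurd a.isLt (not_lt.mpr hx)

lemma viaEmbedding_castLEEmb_apply_of_lt {x : Fin n} (hx : (x : ℕ) < m) :
    σ.viaEmbedding (Fin.castLEEmb h) x = Fin.castLE h (σ ⟨x, hx⟩) :=
  viaEmbedding_castLEEmb_apply_castLE h σ ⟨x, hx⟩

lemma viaEmbedding_castLEEmb_lt_iff (a b : Fin m) :
    σ.viaEmbedding (Fin.castLEEmb h) (Fin.castLE h a) <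
      σ.viaEmbedding (Fin.castLEEmb h) (Fin.castLE h b) ↔ σ a < σ b := by
  simp only [viaEmbedding_castLEEmb_apply_castLE, Fin.castLE_lt_castLE_iff]

lemma invCount_viaEmbedding_castLEEmb :
    invCount (σ.viaEmbedding (Fin.castLEEmb h)) = invCount σ := by
  unfold invCount
  rw [← card_image_of_injective _ ((Fin.castLE_injective h).prodMap (Fin.castLE_injective h))]
  congr 1
  ext ⟨x, y⟩
  simp only [mem_filter, mem_univ, true_and, mem_image, Prod.exists, Prod.map_apply,
    Prod.mk.injEq]
  constructor
  · rintro ⟨hxy, hinv⟩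
    have hy := lt_of_forall_le_apply_eq_of_apply_lt
      (fun _ => viaEmbedding_castLEEmb_apply_of_le h σ) hxy hinv
    exact ⟨⟨x, (Fin.lt_def.mp hxy).trans hy⟩, ⟨y, hy⟩,
      ⟨hxy, (viaEmbedding_castLEEmb_lt_iff h σ _ _).mp hinv⟩, rfl, rfl⟩
  · rintro ⟨a, b, ⟨hab, hinv⟩, rfl, rfl⟩
    exact ⟨hab, (viaEmbedding_castLEEmb_lt_iff h σ _ _).mpr hinv⟩

lemma contains1d32_viaEmbedding_castLEEmb_iff :
    Contains1d32 (σ.viaEmbedding (Fin.castLEEmb h)) ↔ Contains1d32 σ := by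
  constructor
  · rintro ⟨i, j, hj, hij, hi, hdesc⟩
    have hj' : (j : ℕ) + 1 < m := lt_of_forall_le_apply_eq_of_apply_lt
      (fun _ => viaEmbedding_castLEEmb_apply_of_le h σ) (Fin.lt_def.mpr (Nat.lt_succ_self j)) hdesc
    have := Fin.lt_def.mp hij
    exact ⟨⟨i, by omega⟩, ⟨j, by omega⟩, hj', hij, (viaEmbedding_castLEEmb_lt_iff h σ _ _).mp hi,
      (viaEmbedding_castLEEmb_lt_iff h σ _ _).mp hdesc⟩
  · rintro ⟨i, j, hj, hij, hi, hdesc⟩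
    exact ⟨Fin.castLE h i, Fin.castLE h j, hj.trans_le h, hij,
      (viaEmbedding_castLEEmb_lt_iff h σ _ _).mpr hi,
      (viaEmbedding_castLEEmb_lt_iff h σ _ _).mpr hdesc⟩

lemma exists_viaEmbedding_castLEEmb_eq (hfix : ∀ l : Fin n, m ≤ (l : ℕ) → π l = l) :
    ∃ σ : Perm (Fin m), σ.viaEmbedding (Fin.castLEEmb h) = π := by
  let g (a : Fin m) : Fin m := ⟨π (Fin.castLE h a), apply_lt_of_forall_le_apply_eq hfix a.isLt⟩
  have hg : g.Injective := fun a b hab =>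
    Fin.castLE_injective h (π.injective (Fin.ext (Fin.mk.inj hab)))
  refine ⟨Equiv.ofBijective g (Finite.injective_iff_bijective.mp hg), Equiv.ext fun x => ?_⟩
  rcases lt_or_ge (x : ℕ) m with hx | hx
  · rw [viaEmbedding_castLEEmb_apply_of_lt h _ hx]
    rfl
  · rw [viaEmbedding_castLEEmb_apply_of_le h _ hx, hfix x hx]

end Extend

lemma fCount_eq_of_le {m k : ℕ} (hkm : k + 1 ≤ m) (hmn : m ≤ n) : fCount n k = fCount m k := by
  have hmem (σ : Perm (Fin m)) :
      (¬ Contains1d32 (σ.viaEmbedding (Fin.castLEEmb hmn)) ∧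
        invCount (σ.viaEmbedding (Fin.castLEEmb hmn)) = k) ↔
      (¬ Contains1d32 σ ∧ invCount σ = k) := by
    rw [contains1d32_viaEmbedding_castLEEmb_iff, invCount_viaEmbedding_castLEEmb]
  refine (Nat.card_congr (Equiv.ofBijective
    (fun σ => ⟨σ.1.viaEmbedding (Fin.castLEEmb hmn), (hmem σ.1).mpr σ.2⟩)
    ⟨fun σ τ hστ => ?_, ?_⟩)).symm
  · exact Subtype.ext (Perm.viaEmbeddingHom_injective _ (congrArg Subtype.val hστ))
  · rintro ⟨π, hπ⟩
    obtain ⟨σ, rfl⟩ := exists_viaEmbedding_castLEEmb_eq hmn fun l hl =>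
      apply_eq_self_of_invCount_lt hπ.1 (by omega)
    exact ⟨⟨σ, (hmem σ).mp hπ⟩, rfl⟩

/-- If a `1-32`-avoiding permutation of length `n` has `k` inversions and `n ≥ k+2`,
then `π_j = j` for all positions `j ≥ k+2` (1-based; `0`-based: `j ≥ k+1`); hence the
number `f(n,k)` of such permutations satisfies `f(n,k) = f(k+1,k)` for `n ≥ k+1`. -/
theorem stmt15 :
    (∀ (n k : ℕ) (π : Equiv.Perm (Fin n)), ¬ Contains1d32 π → invCount π = k →
      k + 2 ≤ n → ∀ j : Fin n, k + 1 ≤ (j : ℕ) → π j = j) ∧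
    (∀ n k : ℕ, k + 1 ≤ n → fCount n k = fCount (k + 1) k) :=
  ⟨fun _ _ _ hav hk _ _ hj => apply_eq_self_of_invCount_lt hav (by omega),
    fun _ _ hkn => fCount_eq_of_le le_rfl hkn⟩
end

section
/- If a permutation π of length n avoids the vincular pattern 1-32 and has exactly k inversions with n ≥ k+1, then π ends with an ascending run of length at least n − k: π_{k+1} < π_{k+2} < ⋯ < π_n. -/
lemma Fin.val_add_one_eq_of_covBy {n : ℕ} {a b : Fin n} (h : a ⋖ b) : (a : ℕ) + 1 = b := by
  have hab : (a : ℕ) < b := h.lt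
  by_contra hne
  exact h.2 (c := ⟨a + 1, by omega⟩) (Fin.lt_def.2 (by simp)) (Fin.lt_def.2 (by simp; omega))

namespace Equiv.Perm

variable {n : ℕ} {π : Perm (Fin n)}

lemma apply_lt_apply_of_descent_of_le (hπ : ¬ Contains1d32 π) {a b p : Fin n} (hab : a ⋖ b)
    (hdesc : π b < π a) (hpa : p ≤ a) : π b < π p := by
  obtain rfl | hpa := hpa.eq_or_lt
  · exact hdesc
  have hb : (a : ℕ) + 1 < n := (Fin.val_add_one_eq_of_covBy hab).symm ▸ b.isLt
  have hb' : (⟨a + 1, hb⟩ : Fin n) = b := Fin.ext (Fin.val_add_one_eq_of_covBy hab)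
  refine (π.injective.ne (hpa.trans hab.lt).ne').lt_of_le (le_of_not_gt fun hpb => hπ ?_)
  exact ⟨p, a, hb, hpa, hb' ▸ hpb, hb' ▸ hdesc⟩

lemma add_one_le_invCount_of_descent (hπ : ¬ Contains1d32 π) {a b : Fin n} (hab : a ⋖ b)
    (hdesc : π b < π a) : (a : ℕ) + 1 ≤ invCount π := by
  rw [← Fin.card_Iic]
  refine Finset.card_le_card_of_injOn (fun p => (p, b)) (fun p hp => ?_)
    (fun p _ q _ h => congrArg Prod.fst h)
  rw [Finset.mem_coe, Finset.mem_Iic] at hp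
  exact (Finset.mem_filter_univ _).2
    ⟨hp.trans_lt hab.lt, apply_lt_apply_of_descent_of_le hπ hab hdesc hp⟩

lemma strictMonoOn_of_not_contains1d32 (hπ : ¬ Contains1d32 π) :
    StrictMonoOn π {a : Fin n | invCount π ≤ a} := by
  refine strictMonoOn_of_lt_succ ⟨fun _ hx _ _ _ hz => le_trans (α := ℕ) hx hz.1⟩
    fun a ha hk _ => ?_
  have hcov := Order.covBy_succ_of_not_isMax ha
  refine (π.injective.ne hcov.lt.ne).lt_of_le (le_of_not_gt fun hdesc => ?_)
  have hk : invCount π ≤ a := hk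
  have := add_one_le_invCount_of_descent hπ hcov hdesc
  omega

end Equiv.Perm

theorem stmt16_general {n k : ℕ} (π : Equiv.Perm (Fin n)) (h1 : ¬ Contains1d32 π)
    (h2 : invCount π = k) :
    ∀ i j : Fin n, k ≤ (i : ℕ) → i < j → π i < π j := by
  subst h2
  intro i j hi hij
  exact π.strictMonoOn_of_not_contains1d32 h1 hi (hi.trans hij.le) hij

/-- A `1-32`-avoiding permutation of length `n` with `k` inversions, `n ≥ k+1`, ends
with an ascending run `π_{k+1} < π_{k+2} < ⋯ < π_n` (1-based positions). -/
theorem stmt16 {n k : ℕ} (π : Equiv.Perm (Fin n)) (h1 : ¬ Contains1d32 π)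
    (h2 : invCount π = k) (h3 : k + 1 ≤ n) :
    ∀ i j : Fin n, k ≤ (i : ℕ) → i < j → π i < π j :=
  stmt16_general π h1 h2
end

section
/- The number of permutations of length n avoiding the vincular pattern 23-1 satisfies the Bell number recurrence via prefix refinement: letting t(n,a) denote the number of 23-1-avoiding permutations of length n with first letter a, we have t(n,1) = Σ_{b=1}^{n−1} t(n−1,b) and t(n,a) = Σ_{b=1}^{a−1} t(n−1,b) for 1 < a ≤ n, with t(1,1) = 1. -/
/-- `tCount n a` is the number of `23-1`-avoiding permutations of length `n` whose
first letter is `a` (1-based). -/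
noncomputable def tCount (n a : ℕ) : ℕ :=
  Nat.card {π : Equiv.Perm (Fin n) //
    ¬ Contains23d1 π ∧ ∃ h : 0 < n, ((π ⟨0, h⟩ : Fin n) : ℕ) + 1 = a}

open Equiv Finset

namespace Equiv.Perm

variable {m : ℕ}

def consFin (v : Fin (m + 1)) (σ : Perm (Fin m)) : Perm (Fin (m + 1)) :=
  (finSuccEquiv m).trans (σ.optionCongr.trans (finSuccEquiv' v).symm)

@[simp] lemma consFin_zero (v : Fin (m + 1)) (σ : Perm (Fin m)) : consFin v σ 0 = v := by
  simp [consFin]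

@[simp] lemma consFin_succ (v : Fin (m + 1)) (σ : Perm (Fin m)) (i : Fin m) :
    consFin v σ i.succ = v.succAbove (σ i) := by
  simp [consFin]

def tailFin (π : Perm (Fin (m + 1))) : Perm (Fin m) :=
  removeNone ((finSuccEquiv m).symm.trans (π.trans (finSuccEquiv' (π 0))))

lemma succAbove_tailFin (π : Perm (Fin (m + 1))) (i : Fin m) :
    (π 0).succAbove (tailFin π i) = π i.succ := by
  obtain ⟨z, hz⟩ := Fin.exists_succAbove_eq (π.injective.ne (Fin.succ_ne_zero i))
  have : some (tailFin π i) = some z := by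
    rw [tailFin, removeNone_some _ ⟨z, by simp [← hz]⟩]
    simp [← hz]
  rw [Option.some_inj.1 this, hz]

lemma consFin_tailFin (π : Perm (Fin (m + 1))) : consFin (π 0) (tailFin π) = π := by
  ext j
  cases j using Fin.cases <;> simp [succAbove_tailFin]

lemma tailFin_consFin (v : Fin (m + 1)) (σ : Perm (Fin m)) : tailFin (consFin v σ) = σ := by
  refine Equiv.ext fun i => ?_
  simpa using succAbove_tailFin (consFin v σ) i

end Equiv.Perm

instance {n : ℕ} : DecidablePred (@Contains23d1 n) := fun π => by
  unfold Contains23d1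
  infer_instance

section Avoiding

open Perm

variable {m : ℕ}

lemma contains23d1_iff (π : Perm (Fin (m + 1))) :
    Contains23d1 π ↔ ∃ (i : Fin m) (j : Fin (m + 1)),
      i.succ < j ∧ π j < π i.castSucc ∧ π i.castSucc < π i.succ := by
  constructor
  · rintro ⟨i, j, hi, hij, hj, hi'⟩
    exact ⟨⟨i, by omega⟩, j, hij, hj, hi'⟩
  · rintro ⟨i, j, hij, hj, hi⟩
    exact ⟨i.castSucc, j, by simp, hij, hj, hi⟩

lemma contains23d1_consFin_of_le (v : Fin (m + 2)) (σ : Perm (Fin (m + 1))) (hv : v ≠ 0)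
    (hvσ : v ≤ (σ 0).castSucc) : Contains23d1 (consFin v σ) := by
  rw [contains23d1_iff]
  have hv1 : v < consFin v σ (0 : Fin (m + 1)).succ := by
    rwa [consFin_succ, Fin.lt_succAbove_iff_le_castSucc]
  obtain ⟨j, hj⟩ := (consFin v σ).surjective 0
  have hj0 : j ≠ 0 := by
    rintro rfl
    exact hv (by simpa using hj)
  have hj1 : j ≠ (0 : Fin (m + 1)).succ := by
    rintro rfl
    exact Fin.not_lt_zero _ (hj ▸ hv1)
  refine ⟨0, j, ?_, ?_, ?_⟩
  · rw [Fin.ne_iff_vne] at hj0 hj1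
    rw [Fin.lt_def]
    simp only [Fin.val_succ, Fin.val_zero] at hj0 hj1 ⊢
    omega
  · rw [hj, Fin.castSucc_zero, consFin_zero]
    exact Fin.pos_iff_ne_zero.2 hv
  · rwa [Fin.castSucc_zero, consFin_zero]

lemma contains23d1_consFin_iff (v : Fin (m + 2)) (σ : Perm (Fin (m + 1))) :
    Contains23d1 (consFin v σ) ↔ Contains23d1 σ ∨ (v ≠ 0 ∧ v ≤ (σ 0).castSucc) := by
  refine ⟨fun h => ?_, ?_⟩
  · obtain ⟨i, j, hij, hj, hi⟩ := (contains23d1_iff _).1 h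
    cases i using Fin.cases with
    | zero =>
      rw [Fin.castSucc_zero, consFin_zero] at hj hi
      rw [consFin_succ, Fin.lt_succAbove_iff_le_castSucc] at hi
      exact Or.inr ⟨Fin.ne_zero_of_lt hj, hi⟩
    | succ k =>
      cases j using Fin.cases with
      | zero => exact absurd hij (Fin.not_lt_zero _)
      | succ l =>
        simp only [← Fin.succ_castSucc, consFin_succ, Fin.succAbove_lt_succAbove_iff] at hj hi
        exact Or.inl ((contains23d1_iff σ).2 ⟨k, l, Fin.succ_lt_succ_iff.1 hij, hj, hi⟩)
  · rintro (hσ | ⟨hv, hvσ⟩)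
    · obtain ⟨k, l, hkl, hl, hk⟩ := (contains23d1_iff σ).1 hσ
      refine (contains23d1_iff _).2 ⟨k.succ, l.succ, Fin.succ_lt_succ_iff.2 hkl, ?_⟩
      simpa only [← Fin.succ_castSucc, consFin_succ, Fin.succAbove_lt_succAbove_iff] using
        ⟨hl, hk⟩
    · exact contains23d1_consFin_of_le v σ hv hvσ


lemma card_avoiding_consFin (v : Fin (m + 2)) :
    #{π : Perm (Fin (m + 2)) | ¬Contains23d1 π ∧ π 0 = v} =
      #{σ : Perm (Fin (m + 1)) | ¬Contains23d1 σ ∧ (v = 0 ∨ (σ 0).castSucc < v)} := by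
  have avoids_iff (σ : Perm (Fin (m + 1))) :
      ¬Contains23d1 (consFin v σ) ↔ ¬Contains23d1 σ ∧ (v = 0 ∨ (σ 0).castSucc < v) := by
    rw [contains23d1_consFin_iff, not_or, not_and_or, not_not, not_le]
  refine card_bij' (fun π _ => tailFin π) (fun σ _ => consFin v σ) ?_ ?_ ?_ ?_ <;>
    simp only [mem_filter, mem_univ, true_and]
  · rintro π ⟨hπ, rfl⟩
    rwa [← consFin_tailFin π, avoids_iff] at hπ
  · intro σ hσ
    exact ⟨(avoids_iff σ).2 hσ, consFin_zero v σ⟩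
  · rintro π ⟨-, rfl⟩
    exact consFin_tailFin π
  · intro σ _
    exact tailFin_consFin v σ

lemma tCount_succ (k a : ℕ) :
    tCount (k + 1) a = #{π : Perm (Fin (k + 1)) | ¬Contains23d1 π ∧ (π 0 : ℕ) + 1 = a} := by
  simp [tCount, Nat.card_eq_fintype_card, Fintype.card_subtype]

lemma card_avoiding_first_mem (k : ℕ) (s : Finset ℕ) :
    #{σ : Perm (Fin (k + 1)) | ¬Contains23d1 σ ∧ (σ 0 : ℕ) + 1 ∈ s} =
      ∑ b ∈ s, tCount (k + 1) b := by
  rw [card_eq_sum_card_fiberwise (f := fun σ : Perm (Fin (k + 1)) => (σ 0 : ℕ) + 1) (t := s)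
    (fun σ hσ => (mem_filter.1 hσ).2.2)]
  refine sum_congr rfl fun b hb => ?_
  rw [tCount_succ, filter_filter]
  congr 1
  refine filter_congr fun σ _ => ?_
  constructor
  · rintro ⟨⟨hσ, -⟩, rfl⟩
    exact ⟨hσ, rfl⟩
  · rintro ⟨hσ, rfl⟩
    exact ⟨⟨hσ, hb⟩, rfl⟩

theorem tCount_add_two (m a : ℕ) (ha : 1 ≤ a) (ham : a ≤ m + 2) :
    tCount (m + 2) a = ∑ b ∈ Icc 1 (if a = 1 then m + 1 else a - 1), tCount (m + 1) b := by
  obtain ⟨v, rfl⟩ : ∃ v : Fin (m + 2), a = v + 1 := ⟨⟨a - 1, by omega⟩, by simp; omega⟩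
  have first_eq : #{π : Perm (Fin (m + 2)) | ¬Contains23d1 π ∧ (π 0 : ℕ) + 1 = v + 1} =
      #{π : Perm (Fin (m + 2)) | ¬Contains23d1 π ∧ π 0 = v} := by
    simp [Fin.ext_iff]
  rw [tCount_succ, first_eq, card_avoiding_consFin, ← card_avoiding_first_mem]
  congr 1
  refine filter_congr fun σ _ => and_congr_right fun _ => ?_
  have hσ0 := (σ 0).isLt
  simp only [Fin.ext_iff, Fin.lt_def, Fin.val_castSucc, Fin.val_zero, mem_Icc]
  split_ifs <;> omega

lemma tCount_one_one : tCount 1 1 = 1 := by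
  rw [tCount_succ]
  decide

end Avoiding

/-- The prefix refinement recurrence for `23-1`-avoiding permutations (first letters
written 1-based): `t(n,1) = Σ_{b=1}^{n-1} t(n-1,b)`, `t(n,a) = Σ_{b=1}^{a-1} t(n-1,b)`
for `1 < a ≤ n`, and `t(1,1) = 1`. -/
theorem stmt19 :
    (∀ n : ℕ, 2 ≤ n → tCount n 1 = ∑ b ∈ Finset.Icc 1 (n - 1), tCount (n - 1) b) ∧
    (∀ n a : ℕ, 1 < a → a ≤ n → tCount n a = ∑ b ∈ Finset.Icc 1 (a - 1), tCount (n - 1) b) ∧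
    tCount 1 1 = 1 := by
  refine ⟨fun n hn => ?_, fun n a ha han => ?_, tCount_one_one⟩
  · obtain ⟨m, rfl⟩ := Nat.exists_eq_add_of_le' hn
    simpa using tCount_add_two m 1 le_rfl (by omega)
  · obtain ⟨m, rfl⟩ : ∃ m, n = m + 2 := ⟨n - 2, by omega⟩
    rw [tCount_add_two m a ha.le han, if_neg ha.ne']
    rfl
end
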